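/- arXiv:2105.06313 — 3 statements merged into one kernel-verified Lean document; each statement's English description precedes it below -/
import Mathlib

section
/- Suppose the message function f satisfies the sure thing principle. If at some state x the profile of messages sent, i.e., the event E(x) = {x' : f_i(x') = f_i(x) for all i}, is common knowledge at every state x, then all agents send the same messages: f_i = f_j for all i, j. -/
/-- The block of the partition (setoid) `P` containing `x`. -/
def blk {X : Type*} (P : Setoid X) (x : X) : Set X := {y | P.r x y}

/-- The message sent at state `x` by an agent with information `P`,
given the message function `f`. -/
def msg {X A : Type*} (f : Set X → A) (P : Setoid X) (x : X) : A := f (blk P x)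

/-- The working partition of `P` induced by the message function `f`:
two states are equivalent iff the same message is sent at them. -/
def wp {X A : Type*} (f : Set X → A) (P : Setoid X) : Setoid X := Setoid.ker (msg f P)

/-- The sure thing principle: for any nonempty `S` and any partition of `S`
into nonempty blocks all mapped by `f` to `a`, `f S = a`. -/
def STPred {X A : Type*} (f : Set X → A) : Prop :=
  ∀ (S : Set X) (C : Set (Set X)) (a : A), S.Nonempty →
    (∀ B ∈ C, B.Nonempty) → C.PairwiseDisjoint id → ⋃₀ C = S →
    (∀ B ∈ C, f B = a) → f S = a

open scoped Classical in
/- The update function on profiles of partitions induced by the graph `G`: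
if `i` has senders, `i` refines her partition by joining (in the refinement
order: `⊓` in the `Setoid` order, which is the coarsest common refinement)
with the working partitions of all her senders; else her partition stays put.
Note: in the `Setoid` order, smaller = finer, so the paper's coarsening order
`P ≤ Q` ("Q refines P") is `Q ≤ P` here, the paper's join is `⊓`, and the
paper's meet is `⊔`. -/
noncomputable def update {X A I : Type*} (f : Set X → A) (G : I → I → Prop)
    (P : I → Setoid X) (i : I) : Setoid X :=
  if (∃ j, G j i) then ⨅ j ∈ {j | G j i}, (P i ⊓ wp f (P j)) else P i

/- At a state `x`, agent `i`'s possibility sets inside the common-knowledge block `M` of `x`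
partition `M`, and by common knowledge of the messages each of them carries `i`'s message at `x`.
The sure thing principle then gives `f M = fᵢ(x)` for every `i`. -/

theorem blk_eq_of_rel {X : Type*} (P : Setoid X) {y z : X} (h : P.r y z) : blk P y = blk P z :=
  Set.ext fun _ => ⟨P.trans (P.symm h), P.trans h⟩

theorem blk_subset_of_le {X : Type*} {P Q : Setoid X} (hPQ : P ≤ Q) {x y : X}
    (hy : y ∈ blk Q x) : blk P y ⊆ blk Q x :=
  fun _ hz => Q.trans hy (hPQ hz)

theorem pairwiseDisjoint_image_blk {X : Type*} (P : Setoid X) (S : Set X) :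
    (blk P '' S).PairwiseDisjoint id := by
  rintro _ ⟨y, -, rfl⟩ _ ⟨z, -, rfl⟩ hne
  refine Set.disjoint_left.2 fun w hwy hwz => hne ?_
  rw [blk_eq_of_rel P hwy, blk_eq_of_rel P hwz]

theorem sUnion_image_blk {X : Type*} (P : Setoid X) {S : Set X}
    (hS : ∀ y ∈ S, blk P y ⊆ S) : ⋃₀ (blk P '' S) = S := by
  refine Set.Subset.antisymm ?_ fun y hy => ⟨blk P y, ⟨y, hy, rfl⟩, P.refl y⟩
  rintro z ⟨_, ⟨y, hy, rfl⟩, hz⟩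
  exact hS y hy hz

theorem STPred.eq_of_forall_blk {X A : Type*} {f : Set X → A} (hstp : STPred f)
    (P : Setoid X) {S : Set X} (hne : S.Nonempty) (hS : ∀ y ∈ S, blk P y ⊆ S) {a : A}
    (ha : ∀ y ∈ S, f (blk P y) = a) : f S = a :=
  hstp S (blk P '' S) a hne (by rintro _ ⟨y, -, rfl⟩; exact ⟨y, P.refl y⟩)
    (pairwiseDisjoint_image_blk P S) (sUnion_image_blk P hS)
    (by rintro _ ⟨y, hy, rfl⟩; exact ha y hy)

theorem msg_eq_apply_blk_iSup {X A I : Type*} {f : Set X → A} (hstp : STPred f)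
    (P : I → Setoid X)
    (hck : ∀ x : X, blk (⨆ i, P i) x ⊆ {x' | ∀ i, msg f (P i) x' = msg f (P i) x})
    (x : X) (i : I) : msg f (P i) x = f (blk (⨆ k, P k) x) :=
  (hstp.eq_of_forall_blk (P i) ⟨x, (⨆ k, P k).refl x⟩
    (fun _ hy => blk_subset_of_le (le_iSup P i) hy) fun _ hy => hck x hy i).symm

theorem stmt_3_general {X A I : Type*} (f : Set X → A)
    (hstp : STPred f) (P : I → Setoid X)
    (hck : ∀ x : X, blk (⨆ i, P i) x ⊆ {x' | ∀ i, msg f (P i) x' = msg f (P i) x}) :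
    ∀ i j, msg f (P i) = msg f (P j) := fun i j =>
  funext fun x =>
    (msg_eq_apply_blk_iSup hstp P hck x i).trans (msg_eq_apply_blk_iSup hstp P hck x j).symm

/-- Under the sure thing principle, if at every state `x` the profile of
messages sent (the event `E(x)`) is common knowledge at `x`, then all agents send the
same messages: `fᵢ = fⱼ` for all `i, j`. -/
theorem stmt_3 {X A I : Type*} [Fintype I] [Nonempty I] (f : Set X → A)
    (hstp : STPred f) (P : I → Setoid X)
    (hck : ∀ x : X, blk (⨆ i, P i) x ⊆ {x' | ∀ i, msg f (P i) x' = msg f (P i) x}) :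
    ∀ i j, msg f (P i) = msg f (P j) :=
  stmt_3_general f hstp P hck
end

section
/- There exist a four-element state space X, a message function f, and a two-agent communication graph such that the update function g is not monotone: there exist profiles P ≤ P' of partition pairs with g(P) not ≤ g(P'). -/
/-! Take states `x, y, w, z = 0, 1, 2, 3` and let agent 0 know nothing. Refining agent 1's
information from `{{0,1},{2,3}}` to the discrete partition makes her messages at `1` and `2` agree
(`{1}` and `{2}` both send `b`, whereas `{0,1}` sends `a` and `{2,3}` sends `b`), so agent 0, who
learns only agent 1's working partition, can no longer tell `1` from `2`. -/

section Partitions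

variable {X A : Type*}

theorem blk_bot (x : X) : blk (⊥ : Setoid X) x = {x} := by
  ext y
  simp [blk, eq_comm]

theorem blk_ker {B : Type*} (g : X → B) (x : X) : blk (Setoid.ker g) x = {y | g x = g y} := rfl

theorem wp_rel_iff (f : Set X → A) (P : Setoid X) (x y : X) :
    (wp f P).r x y ↔ f (blk P x) = f (blk P y) := Iff.rfl

theorem update_of_sender_unique {I : Type*} (f : Set X → A) {G : I → I → Prop}
    (P : I → Setoid X) {i j : I} (hG : ∀ k, G k i ↔ k = j) :
    update f G P i = P i ⊓ wp f (P j) := by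
  have hsenders : {k | G k i} = {j} := Set.ext hG
  rw [update, if_pos ⟨j, (hG j).2 rfl⟩, hsenders, iInf_singleton]

end Partitions

def halves : Setoid (Fin 4) := Setoid.ker fun x : Fin 4 => x.val < 2

/-- Message `a` is `True`: among nonempty sets it is sent exactly on `{0}` and `{0,1}`. -/
def signal (S : Set (Fin 4)) : Prop := 0 ∈ S ∧ S ⊆ {0, 1}

theorem not_wp_signal_bot_le_halves : ¬ wp signal ⊥ ≤ wp signal halves := by
  intro h
  have hbot : (wp signal ⊥).r 1 2 := by
    simp [wp_rel_iff, blk_bot, signal]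
  have hhalves := (wp_rel_iff _ _ _ _).1 (h hbot)
  have h01 : signal (blk halves 1) := by
    simp only [halves, blk_ker, signal]
    refine ⟨by decide, fun x hx => ?_⟩
    fin_cases x <;> simp_all
  have h23 : ¬ signal (blk halves 2) := by
    simp [halves, blk_ker, signal]
  exact h23 (hhalves ▸ h01)

/-- On a four-element state space with two agents, the update function `g`
need not be monotone: there exist profiles with `P ≤ P'` in the componentwise
coarsening order (i.e. `P' i ≤ P i` in the `Setoid` order) but `g(P) ≰ g(P')`. -/
theorem stmt_7 :
    ∃ (A : Type) (f : Set (Fin 4) → A) (G : Fin 2 → Fin 2 → Prop)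
      (P P' : Fin 2 → Setoid (Fin 4)),
      (∀ i, P' i ≤ P i) ∧ ¬ (∀ i, update f G P' i ≤ update f G P i) := by
  refine ⟨Prop, signal, (· ≠ ·), ![⊤, halves], ![⊤, ⊥], ?_, fun h => ?_⟩
  · intro i
    fin_cases i
    exacts [le_rfl, bot_le]
  · have hsender : ∀ k : Fin 2, k ≠ 0 ↔ k = 1 := by decide
    have h0 := h 0
    rw [update_of_sender_unique _ _ hsender, update_of_sender_unique _ _ hsender] at h0
    simp only [Matrix.cons_val_zero, Matrix.cons_val_one, top_inf_eq] at h0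
    exact not_wp_signal_bot_le_halves h0
end

section
/- Expected-value maximization satisfies the sure thing principle: if X is a probability space, D a finite action set, u : D × X → ℝ bounded measurable, and f(S) is an action maximizing conditional expected utility E[u(d,·) | S] (with a fixed tie-breaking rule given by a linear order on D), then for any countable measurable partition {S_h} of S with all f(S_h) = a, one has f(S) = a. -/
open MeasureTheory Set

/-! Conditional expected utility on `S` is, up to the positive factor `μ S`, the set integral over
`S`, which is the sum of the set integrals over the blocks. If `a` maximizes on every block, it
maximizes the sum. A maximizer `d` of the sum ties with `a` in total while doing weakly worse on
every block, so it ties on every block; thus `d` maximizes on a block and the tie-breaking there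
gives `a ≤ d`. -/

def maximizers {D β : Type*} [Preorder β] (g : D → β) : Set D := {d | ∀ d', g d' ≤ g d}

lemma maximizers_div_const {D 𝕜 : Type*} [Field 𝕜] [LinearOrder 𝕜] [IsStrictOrderedRing 𝕜]
    (g : D → 𝕜) {m : 𝕜} (hm : 0 < m) : maximizers (fun d => g d / m) = maximizers g := by
  ext d
  simp [maximizers, div_le_div_iff_of_pos_right hm]

section HasSum

variable {ι D α : Type*} [AddCommGroup α] [PartialOrder α] [IsOrderedAddMonoid α]
  [TopologicalSpace α] [IsTopologicalAddGroup α] [OrderClosedTopology α]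
  {g : ι → D → α} {G : D → α}

lemma maximizers_subset_of_hasSum (hG : ∀ d, HasSum (fun i => g i d) (G d))
    {a : D} (ha : ∀ i, a ∈ maximizers (g i)) {d : D} (hd : d ∈ maximizers G) (i : ι) :
    d ∈ maximizers (g i) := by
  have hsum_eq : G d = G a := le_antisymm (hasSum_le (fun j => ha j d) (hG d) (hG a)) (hd a)
  have hblock_eq : g i d = g i a := by
    by_contra hne
    exact (hasSum_lt (fun j => ha j d) (lt_of_le_of_ne (ha i d) hne) (hG d) (hG a)).ne hsum_eq
  intro d'
  exact (ha i d').trans hblock_eq.ge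

theorem isLeast_maximizers_of_hasSum [Preorder D] [Nonempty ι]
    (hG : ∀ d, HasSum (fun i => g i d) (G d)) {a : D} (ha : ∀ i, IsLeast (maximizers (g i)) a) :
    IsLeast (maximizers G) a := by
  obtain ⟨i⟩ := ‹Nonempty ι›
  refine ⟨fun d => hasSum_le (fun j => (ha j).1 d) (hG d) (hG a), fun d hd => ?_⟩
  exact (ha i).2 (maximizers_subset_of_hasSum hG (fun j => (ha j).1) hd i)

end HasSum

theorem stmt_17_general {X : Type*} [MeasurableSpace X] (μ : Measure X)
    [IsProbabilityMeasure μ] {D : Type*} [LinearOrder D]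
    (u : D → X → ℝ) (hmeas : ∀ d, Measurable (u d))
    (C : ℝ) (hbd : ∀ d x, |u d x| ≤ C)
    (f : Set X → D)
    (hf : ∀ S : Set X, MeasurableSet S → 0 < μ S →
      IsLeast {d : D | ∀ d' : D,
        (∫ x in S, u d' x ∂μ) / (μ S).toReal ≤ (∫ x in S, u d x ∂μ) / (μ S).toReal}
        (f S))
    (S : Set X) (hS : MeasurableSet S) (hSpos : 0 < μ S)
    {H : Type*} [Countable H] (c : H → Set X)
    (hcm : ∀ h, MeasurableSet (c h)) (hcpos : ∀ h, 0 < μ (c h))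
    (hdisj : Pairwise (Function.onFun Disjoint c)) (hunion : ⋃ h, c h = S)
    (a : D) (ha : ∀ h, f (c h) = a) : f S = a := by
  have hleast : ∀ T, MeasurableSet T → 0 < μ T →
      IsLeast (maximizers fun d => ∫ x in T, u d x ∂μ) (f T) := fun T hT hTpos => by
    rw [← maximizers_div_const _ (ENNReal.toReal_pos hTpos.ne' (measure_ne_top μ T))]
    exact hf T hT hTpos
  have hsum : ∀ d, HasSum (fun h => ∫ x in c h, u d x ∂μ) (∫ x in S, u d x ∂μ) := fun d => by
    have hint : Integrable (u d) μ := .of_bound (hmeas d).aestronglyMeasurable C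
      (ae_of_all μ (hbd d))
    simpa only [hunion] using hasSum_integral_iUnion hcm hdisj hint.integrableOn
  have : Nonempty H := by
    obtain ⟨x, hx⟩ := nonempty_of_measure_ne_zero hSpos.ne'
    obtain ⟨h, -⟩ := mem_iUnion.mp (hunion ▸ hx)
    exact ⟨h⟩
  refine (hleast S hS hSpos).unique (isLeast_maximizers_of_hasSum hsum fun h => ?_)
  exact ha h ▸ hleast (c h) (hcm h) (hcpos h)

/-- Expected-value maximization (with a fixed linear-order tie-breaking
rule) satisfies the sure thing principle: if `f S` is the least maximizer of the
conditional expected utility on `S`, and `{c h}` is a countable measurable partition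
of `S` into sets of positive measure with `f (c h) = a` for all `h`, then `f S = a`. -/
theorem stmt_17 {X : Type*} [MeasurableSpace X] (μ : Measure X)
    [IsProbabilityMeasure μ] {D : Type*} [Fintype D] [LinearOrder D]
    (u : D → X → ℝ) (hmeas : ∀ d, Measurable (u d))
    (C : ℝ) (hbd : ∀ d x, |u d x| ≤ C)
    (f : Set X → D)
    (hf : ∀ S : Set X, MeasurableSet S → 0 < μ S →
      IsLeast {d : D | ∀ d' : D,
        (∫ x in S, u d' x ∂μ) / (μ S).toReal ≤ (∫ x in S, u d x ∂μ) / (μ S).toReal}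
        (f S))
    (S : Set X) (hS : MeasurableSet S) (hSpos : 0 < μ S)
    {H : Type*} [Countable H] (c : H → Set X)
    (hcm : ∀ h, MeasurableSet (c h)) (hcpos : ∀ h, 0 < μ (c h))
    (hdisj : Pairwise (Function.onFun Disjoint c)) (hunion : ⋃ h, c h = S)
    (a : D) (ha : ∀ h, f (c h) = a) : f S = a :=
  stmt_17_general μ u hmeas C hbd f hf S hS hSpos c hcm hcpos hdisj hunion a ha
end
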